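/- Let (𝔤, ⋆) be a finite-dimensional left-symmetric algebra over a field of characteristic zero such that tr(R⋆_b) = 0 for every b ∈ 𝔤, where R⋆_b(v) = v⋆b. Then for every a ∈ 𝔤 the right multiplication operator R⋆_a is nilpotent. -/

import Mathlib

/-!
Write `x ⋆ y = s x y`, `R_b = s.flip b`, `L_u = s u`, and `xₙ = R_aⁿ a` (so `xₙ₊₁ = xₙ ⋆ a`).
Left-symmetry says `R_{u⋆v} = R_v R_u + [L_u, R_v]`, and the commutator is traceless against
every power of `R_a`; by induction `tr (R_a^{n+1}) = tr (R_{xₙ}) = 0`. In characteristic zero an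
endomorphism all of whose positive powers are traceless is nilpotent: over an algebraic closure
the power sums of the eigenvalues (with multiplicity) vanish, so `∑ μ Q(μ) = 0` for every
polynomial `Q`, and choosing `Q` to vanish at all eigenvalues but one forces every eigenvalue
to be zero.
-/

open Polynomial Module LinearMap

namespace Multiset

variable {K : Type*}

lemma sum_map_mul_eval_eq_zero [CommRing K] {s : Multiset K}
    (h : ∀ n : ℕ, (s.map (· ^ (n + 1))).sum = 0) (p : K[X]) :
    (s.map fun x ↦ x * p.eval x).sum = 0 := by
  induction p using Polynomial.induction_on' with
  | add p q hp hq => simp only [eval_add, mul_add, sum_map_add, hp, hq, add_zero]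
  | monomial k a =>
    simpa [eval_monomial, ← pow_succ', mul_left_comm _ a, sum_map_mul_left] using
      congrArg (a * ·) (h k)

lemma eq_zero_of_sum_map_pow_succ_eq_zero [Field K] [CharZero K] {s : Multiset K}
    (h : ∀ n : ℕ, (s.map (· ^ (n + 1))).sum = 0) : ∀ x ∈ s, x = 0 := by
  classical
  intro ν hν
  by_contra hν0
  set Q : K[X] := ∏ μ ∈ s.toFinset.erase ν, (X - C μ)
  have hQ : ∀ μ ∈ s.toFinset, μ ≠ ν → Q.eval μ = 0 := fun μ hμ hne ↦ by
    simp only [Q, eval_prod]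
    exact Finset.prod_eq_zero (Finset.mem_erase.mpr ⟨hne, hμ⟩) (by simp)
  have hQν : Q.eval ν ≠ 0 := by
    simp only [Q, eval_prod, eval_sub, eval_X, eval_C]
    exact Finset.prod_ne_zero_iff.mpr fun μ hμ ↦ sub_ne_zero.mpr (Finset.ne_of_mem_erase hμ).symm
  have hsum := sum_map_mul_eval_eq_zero h Q
  rw [Finset.sum_multiset_map_count, Finset.sum_eq_single_of_mem ν (mem_toFinset.mpr hν)
    fun μ hμ hne ↦ by rw [hQ μ hμ hne, mul_zero, smul_zero]] at hsum
  exact smul_ne_zero (count_ne_zero.mpr hν) (mul_ne_zero hν0 hQν) hsum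

end Multiset

namespace LinearMap

lemma trace_pow_eq_pow_mul_finrank_of_isNilpotent_sub {R M : Type*} [CommRing R] [IsReduced R]
    [AddCommGroup M] [Module R M] [Module.Free R M] [Module.Finite R M]
    {f : Module.End R M} (μ : R) (hf : IsNilpotent (f - algebraMap R _ μ)) (n : ℕ) :
    trace R M (f ^ n) = μ ^ n * finrank R M := by
  induction n with
  | zero => simp
  | succ n ih =>
    rw [pow_succ, Module.End.mul_eq_comp,
      trace_comp_eq_mul_of_commute_of_isNilpotent μ ((Commute.refl f).pow_left n) hf, ih]
    ring

variable {K V : Type*} [Field K] [AddCommGroup V] [Module K V] [FiniteDimensional K V]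

lemma trace_pow_eq_sum_roots_charpoly_pow [IsAlgClosed K] (f : Module.End K V) (n : ℕ) :
    trace K V (f ^ n) = (f.charpoly.roots.map (· ^ n)).sum := by
  classical
  have hds := DirectSum.isInternal_submodule_of_iSupIndep_of_iSup_eq_top
    f.independent_maxGenEigenspace f.iSup_maxGenEigenspace_eq_top
  have hfin : {μ | f.maxGenEigenspace μ ≠ ⊥}.Finite :=
    WellFoundedGT.finite_ne_bot_of_iSupIndep f.independent_maxGenEigenspace
  have hroots : hfin.toFinset = f.charpoly.roots.toFinset := by
    ext μ
    rw [Set.Finite.mem_toFinset, Multiset.mem_toFinset, ← Multiset.count_ne_zero, count_roots,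
      ← f.finrank_maxGenEigenspace_eq, Ne, Submodule.finrank_eq_zero]
    rfl
  rw [trace_eq_sum_trace_restrict' hds hfin
    (fun μ ↦ f.mapsTo_maxGenEigenspace_of_comm ((Commute.refl f).pow_right n) μ),
    Finset.sum_multiset_map_count, ← hroots]
  refine Finset.sum_congr rfl fun μ _ ↦ ?_
  rw [← Module.End.pow_restrict n (f.mapsTo_maxGenEigenspace_of_comm rfl μ),
    trace_pow_eq_pow_mul_finrank_of_isNilpotent_sub μ
      (f.isNilpotent_restrict_maxGenEigenspace_sub_algebraMap μ),
    count_roots, ← f.finrank_maxGenEigenspace_eq, nsmul_eq_mul, mul_comm]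

lemma isNilpotent_of_forall_trace_pow_succ_eq_zero_of_isAlgClosed [CharZero K] [IsAlgClosed K]
    {f : Module.End K V} (hf : ∀ n : ℕ, trace K V (f ^ (n + 1)) = 0) : IsNilpotent f := by
  have hroots : f.charpoly.roots = Multiset.replicate f.charpoly.roots.card 0 :=
    Multiset.eq_replicate_card.mpr <| Multiset.eq_zero_of_sum_map_pow_succ_eq_zero fun n ↦ by
      rw [← trace_pow_eq_sum_roots_charpoly_pow, hf]
  have hχ : f.charpoly = X ^ f.charpoly.roots.card := by
    conv_lhs =>
      rw [(IsAlgClosed.splits f.charpoly).eq_prod_roots_of_monic f.charpoly_monic, hroots]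
    simp
  exact ⟨_, by rw [← aeval_X_pow (R := K), ← hχ, aeval_self_charpoly]⟩

lemma isNilpotent_of_forall_trace_pow_succ_eq_zero [CharZero K] {f : Module.End K V}
    (hf : ∀ n : ℕ, trace K V (f ^ (n + 1)) = 0) : IsNilpotent f := by
  let L := AlgebraicClosure K
  have hL : IsNilpotent (f.baseChange L) :=
    isNilpotent_of_forall_trace_pow_succ_eq_zero_of_isAlgClosed fun n ↦ by
      rw [← baseChange_pow, trace_baseChange, hf, map_zero]
  exact (IsNilpotent.map_iff (f := Module.End.baseChangeHom K L V)
    (baseChangeHom_injective K V L)).mp hL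

end LinearMap

def IsLeftSymmetric {R A : Type*} [CommRing R] [AddCommGroup A] [Module R A]
    (s : A →ₗ[R] A →ₗ[R] A) : Prop :=
  ∀ x y z : A, s (s x y) z - s x (s y z) = s (s y x) z - s y (s x z)

namespace IsLeftSymmetric

variable {R A : Type*} [CommRing R] [AddCommGroup A] [Module R A] {s : A →ₗ[R] A →ₗ[R] A}

lemma flip_apply_eq (hs : IsLeftSymmetric s) (u v : A) :
    s.flip (s u v) = s.flip v * s.flip u + (s u * s.flip v - s.flip v * s u) := by
  ext z
  simp only [LinearMap.add_apply, LinearMap.sub_apply, Module.End.mul_apply, flip_apply]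
  linear_combination (norm := module) -hs z u v

lemma trace_pow_mul_flip_pow_apply (hs : IsLeftSymmetric s) (a : A) (n m : ℕ) :
    trace R A (s.flip a ^ m * s.flip ((s.flip a ^ n) a))
      = trace R A (s.flip a ^ (m + n + 1)) := by
  have hcyc (k : ℕ) (g h : Module.End R A) : trace R A (g ^ k * (h * g - g * h)) = 0 := by
    rw [mul_sub, map_sub, ← mul_assoc, trace_mul_comm, ← mul_assoc, ← pow_succ', pow_succ,
      mul_assoc, sub_self]
  induction n generalizing m with
  | zero => rw [pow_zero, Module.End.one_apply, ← pow_succ]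
  | succ n ih =>
    rw [pow_succ', Module.End.mul_apply, flip_apply, flip_apply_eq hs, mul_add, map_add, hcyc,
      add_zero, ← mul_assoc, ← pow_succ, ih]
    ring_nf

lemma trace_flip_pow_succ (hs : IsLeftSymmetric s) (a : A) (n : ℕ) :
    trace R A (s.flip a ^ (n + 1)) = trace R A (s.flip ((s.flip a ^ n) a)) := by
  simpa using (hs.trace_pow_mul_flip_pow_apply a n 0).symm

end IsLeftSymmetric

/-- In a finite-dimensional left-symmetric algebra over a field of
characteristic zero in which every right multiplication has trace zero, every right
multiplication operator is nilpotent. -/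
theorem stmt17 {K A : Type*} [Field K] [CharZero K] [AddCommGroup A] [Module K A]
    [FiniteDimensional K A]
    (s : A →ₗ[K] A →ₗ[K] A)
    (hls : ∀ x y z : A, s (s x y) z - s x (s y z) = s (s y x) z - s y (s x z))
    (htr : ∀ b : A, LinearMap.trace K A (s.flip b) = 0) :
    ∀ a : A, IsNilpotent (s.flip a : Module.End K A) := by
  intro a
  have hs : IsLeftSymmetric s := hls
  exact isNilpotent_of_forall_trace_pow_succ_eq_zero fun n ↦
    (hs.trace_flip_pow_succ a n).trans (htr _)
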